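/- arXiv:2206.06648 — 4 statements merged into one kernel-verified Lean document; each statement's English description precedes it below -/
import Mathlib

section
/- Let α ≥ 0 and h ∈ [0,1]. Then for all t' ≥ t ≥ 0, ((1+t)^{-α} - (1+t')^{-α})^2 (1+t)^{2h} ≤ C (t'-t)^{2h} (1+t)^{-2α} for some constant C depending only on α (one may take C = max(α², 1)). -/
/-!
Write `u = (1 + t') / (1 + t) ≥ 1`, so that the difference is `(1 + t)^(-α) (1 - u^(-α))`.
The factor `1 - u^(-α)` is at most `1`, and at most `α (u - 1)` by the tangent-line bound
`u^(-α) = exp (-α log u) ≥ 1 - α log u ≥ 1 - α (u - 1)`. Hence it is at most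
`max α 1 * min 1 (u - 1) ≤ max α 1 * (u - 1)^h` for `h ∈ [0, 1]`, and `(u - 1) (1 + t) = t' - t`.
-/

open Real

lemma rpow_two_mul {x : ℝ} (hx : 0 ≤ x) (y : ℝ) : x ^ (2 * y) = (x ^ y) ^ 2 := by
  rw [mul_comm, rpow_mul hx, rpow_two]

lemma one_sub_mul_sub_one_le_rpow_neg {α u : ℝ} (hα : 0 ≤ α) (hu : 0 < u) :
    1 - α * (u - 1) ≤ u ^ (-α) := by
  rw [rpow_def_of_pos hu]
  calc 1 - α * (u - 1) ≤ log u * -α + 1 := by nlinarith [log_le_sub_one_of_pos hu]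
    _ ≤ exp (log u * -α) := add_one_le_exp _

lemma min_one_le_rpow {r h : ℝ} (hr : 0 ≤ r) (h0 : 0 ≤ h) (h1 : h ≤ 1) : min 1 r ≤ r ^ h := by
  rcases le_total r 1 with hr1 | hr1
  · exact (min_le_right 1 r).trans (self_le_rpow_of_le_one hr hr1 h1)
  · exact (min_le_left 1 r).trans (one_le_rpow hr1 h0)

lemma one_sub_rpow_neg_le {α u h : ℝ} (hα : 0 ≤ α) (hu : 1 ≤ u) (h0 : 0 ≤ h) (h1 : h ≤ 1) :
    1 - u ^ (-α) ≤ max α 1 * (u - 1) ^ h := by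
  have hu_pos : 0 < u := one_pos.trans_le hu
  have hmin : 1 - u ^ (-α) ≤ max α 1 * min 1 (u - 1) := by
    rcases min_choice 1 (u - 1) with hm | hm <;> rw [hm]
    · nlinarith [rpow_pos_of_pos hu_pos (-α), le_max_right α 1]
    · nlinarith [one_sub_mul_sub_one_le_rpow_neg hα hu_pos, le_max_left α 1]
  calc 1 - u ^ (-α) ≤ max α 1 * min 1 (u - 1) := hmin
    _ ≤ max α 1 * (u - 1) ^ h := by
      gcongr
      exact min_one_le_rpow (by linarith) h0 h1

lemma rpow_neg_sub_rpow_neg_mul_rpow_le {α x y h : ℝ} (hα : 0 ≤ α) (hx : 0 < x) (hxy : x ≤ y)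
    (h0 : 0 ≤ h) (h1 : h ≤ 1) :
    (x ^ (-α) - y ^ (-α)) * x ^ h ≤ max α 1 * (y - x) ^ h * x ^ (-α) := by
  set u := y / x
  have hu : 1 ≤ u := (one_le_div hx).2 hxy
  have hy : y ^ (-α) = x ^ (-α) * u ^ (-α) := by
    rw [← mul_rpow hx.le (by positivity), mul_div_cancel₀ y hx.ne']
  have hux : (u - 1) * x = y - x := by rw [sub_mul, div_mul_cancel₀ y hx.ne', one_mul]
  calc (x ^ (-α) - y ^ (-α)) * x ^ h = x ^ (-α) * (1 - u ^ (-α)) * x ^ h := by rw [hy]; ring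
    _ ≤ x ^ (-α) * (max α 1 * (u - 1) ^ h) * x ^ h := by
      gcongr
      exact one_sub_rpow_neg_le hα hu h0 h1
    _ = max α 1 * ((u - 1) * x) ^ h * x ^ (-α) := by
      rw [mul_rpow (by linarith) hx.le]; ring
    _ = max α 1 * (y - x) ^ h * x ^ (-α) := by rw [hux]

theorem stmt1 (α : ℝ) (hα : 0 ≤ α) :
    ∃ C : ℝ, ∀ h ∈ Set.Icc (0:ℝ) 1, ∀ t t' : ℝ, 0 ≤ t → t ≤ t' →
      ((1 + t) ^ (-α) - (1 + t') ^ (-α)) ^ 2 * (1 + t) ^ (2 * h) ≤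
        C * (t' - t) ^ (2 * h) * (1 + t) ^ (-(2 * α)) := by
  refine ⟨max α 1 ^ 2, ?_⟩
  rintro h ⟨h0, h1⟩ t t' ht htt'
  have hx : 0 < 1 + t := by linarith
  have hxy : 1 + t ≤ 1 + t' := by linarith
  have hdiff : 0 ≤ (1 + t) ^ (-α) - (1 + t') ^ (-α) :=
    sub_nonneg.2 (rpow_le_rpow_of_nonpos hx hxy (neg_nonpos.2 hα))
  have key := rpow_neg_sub_rpow_neg_mul_rpow_le hα hx hxy h0 h1
  rw [add_sub_add_left_eq_sub] at key
  calc ((1 + t) ^ (-α) - (1 + t') ^ (-α)) ^ 2 * (1 + t) ^ (2 * h)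
      = (((1 + t) ^ (-α) - (1 + t') ^ (-α)) * (1 + t) ^ h) ^ 2 := by
        rw [rpow_two_mul hx.le]; ring
    _ ≤ (max α 1 * (t' - t) ^ h * (1 + t) ^ (-α)) ^ 2 := by gcongr
    _ = max α 1 ^ 2 * (t' - t) ^ (2 * h) * (1 + t) ^ (-(2 * α)) := by
        rw [← mul_neg, rpow_two_mul hx.le, rpow_two_mul (sub_nonneg.2 htt')]
        ring
end

section
/- For every compact subset 𝓗 of (0,1), the function h ↦ ∫₀^∞ ((1+s)^{h-1/2} - s^{h-1/2})² ds is finite for each h ∈ (0,1) and continuous on 𝓗; in particular sup over h ∈ 𝓗 of this integral is finite. -/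
/-!
For `s ≤ 1` the integrand is at most `(1 + s) ^ (2h - 1) + s ^ (2h - 1)`, and for all
`s > 0` writing `(1 + s) ^ c - s ^ c = s ^ c ((1 + 1/s) ^ c - 1)` with `|(1 + u) ^ c - 1| ≤ u`
bounds it by `s ^ (2h - 3)`. For `h` in `[a, b] ⊆ (0, 1)` this gives the integrable majorant
`2 + s ^ (2a - 1)` near `0` and `s ^ (2b - 3)` at infinity, so dominated convergence makes the
integral continuous on `(0, 1)`, hence bounded on compact subsets.
-/

open Real Set MeasureTheory Filter

lemma abs_one_add_rpow_sub_one_le {c u : ℝ} (hc : |c| ≤ 1) (hu : 0 ≤ u) :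
    |(1 + u) ^ c - 1| ≤ u := by
  have h1u : 1 ≤ 1 + u := by linarith
  obtain ⟨hc₁, hc₂⟩ := abs_le.1 hc
  rcases le_total 0 c with hc₀ | hc₀
  · have hle : (1 + u) ^ c ≤ 1 + u := by
      simpa using rpow_le_rpow_of_exponent_le h1u hc₂
    rw [abs_of_nonneg (by linarith [one_le_rpow h1u hc₀])]
    linarith
  · have hge : (1 + u)⁻¹ ≤ (1 + u) ^ c := by
      simpa [rpow_neg_one] using rpow_le_rpow_of_exponent_le h1u hc₁
    have hinv : 1 - u ≤ (1 + u)⁻¹ := by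
      rw [← one_div, le_div_iff₀ (by linarith)]
      nlinarith
    rw [abs_of_nonpos (by linarith [rpow_le_one_of_one_le_of_nonpos h1u hc₀])]
    linarith

lemma abs_one_add_rpow_sub_rpow_le {c s : ℝ} (hc : |c| ≤ 1) (hs : 0 < s) :
    |(1 + s) ^ c - s ^ c| ≤ s ^ (c - 1) := by
  have hfactor : (1 + s) ^ c - s ^ c = s ^ c * ((1 + s⁻¹) ^ c - 1) := by
    rw [mul_sub, mul_one, ← mul_rpow hs.le (by positivity), mul_add, mul_one,
      mul_inv_cancel₀ hs.ne', add_comm]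
  rw [hfactor, abs_mul, abs_of_pos (rpow_pos_of_pos hs c), rpow_sub_one hs.ne', div_eq_mul_inv]
  gcongr
  exact abs_one_add_rpow_sub_one_le hc (inv_nonneg.2 hs.le)

/-- The integrand of the Mandelbrot–Van Ness normalising constant of fractional Brownian
motion. -/
noncomputable def mvnIntegrand (h s : ℝ) : ℝ := ((1 + s) ^ (h - 1/2) - s ^ (h - 1/2)) ^ 2

lemma rpow_sub_one_half_sq {x : ℝ} (hx : 0 ≤ x) (h : ℝ) :
    (x ^ (h - 1/2)) ^ 2 = x ^ (2 * h - 1) := by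
  rw [← rpow_mul_natCast hx]; ring_nf

lemma mvnIntegrand_le_add {h s : ℝ} (hs : 0 < s) :
    mvnIntegrand h s ≤ (1 + s) ^ (2 * h - 1) + s ^ (2 * h - 1) := by
  rw [mvnIntegrand, ← rpow_sub_one_half_sq (by linarith) h, ← rpow_sub_one_half_sq hs.le h]
  nlinarith [rpow_nonneg (by linarith : (0:ℝ) ≤ 1 + s) (h - 1/2), rpow_nonneg hs.le (h - 1/2)]

lemma mvnIntegrand_le_rpow {h s : ℝ} (hh : |h - 1/2| ≤ 1) (hs : 0 < s) :
    mvnIntegrand h s ≤ s ^ (2 * h - 3) := by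
  calc mvnIntegrand h s ≤ (s ^ (h - 1/2 - 1)) ^ 2 := by
        rw [mvnIntegrand, ← sq_abs]
        gcongr
        exact abs_one_add_rpow_sub_rpow_le hh hs
    _ = s ^ (2 * h - 3) := by rw [← rpow_mul_natCast hs.le]; ring_nf

noncomputable def mvnBound (a b s : ℝ) : ℝ :=
  if s ≤ 1 then 2 + s ^ (2 * a - 1) else s ^ (2 * b - 3)

lemma mvnIntegrand_le_mvnBound {a b h s : ℝ} (ha : -1/2 ≤ a) (hb : b ≤ 1) (hh : h ∈ Icc a b)
    (hs : 0 < s) : mvnIntegrand h s ≤ mvnBound a b s := by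
  obtain ⟨hah, hhb⟩ := hh
  unfold mvnBound
  split_ifs with hs₁
  · have h₁ : (1 + s) ^ (2 * h - 1) ≤ 2 := by
      calc (1 + s) ^ (2 * h - 1) ≤ (1 + s) ^ (1 : ℝ) :=
            rpow_le_rpow_of_exponent_le (by linarith) (by linarith)
        _ ≤ 2 := by rw [rpow_one]; linarith
    have h₂ : s ^ (2 * h - 1) ≤ s ^ (2 * a - 1) :=
      rpow_le_rpow_of_exponent_ge hs hs₁ (by linarith)
    linarith [mvnIntegrand_le_add (h := h) hs]
  · calc mvnIntegrand h s ≤ s ^ (2 * h - 3) :=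
          mvnIntegrand_le_rpow (abs_le.2 ⟨by linarith, by linarith⟩) hs
      _ ≤ s ^ (2 * b - 3) := rpow_le_rpow_of_exponent_le (by linarith) (by linarith)

lemma integrableOn_mvnBound {a b : ℝ} (ha : 0 < a) (hb : b < 1) :
    IntegrableOn (mvnBound a b) (Ioi 0) := by
  have h_near : IntegrableOn (fun s : ℝ => 2 + s ^ (2 * a - 1)) (Ioc 0 1) := by
    refine (integrableOn_const measure_Ioc_lt_top.ne).add ?_
    rw [integrableOn_Ioc_iff_integrableOn_Ioo]
    exact (intervalIntegral.integrableOn_Ioo_rpow_iff one_pos).2 (by linarith)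
  have h_far : IntegrableOn (fun s : ℝ => s ^ (2 * b - 3)) (Ioi 1) :=
    integrableOn_Ioi_rpow_of_lt (by linarith) one_pos
  rw [← Ioc_union_Ioi_eq_Ioi zero_le_one]
  refine IntegrableOn.union ?_ ?_
  · exact h_near.congr_fun (fun s hs => (if_pos hs.2).symm) measurableSet_Ioc
  · exact h_far.congr_fun (fun s hs => (if_neg (not_le.2 (mem_Ioi.1 hs))).symm) measurableSet_Ioi

lemma continuous_mvnIntegrand_left {s : ℝ} (hs : 0 < s) :
    Continuous fun h => mvnIntegrand h s := by
  unfold mvnIntegrand; fun_prop (disch := positivity)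

lemma measurable_mvnIntegrand (h : ℝ) : Measurable (mvnIntegrand h) := by
  unfold mvnIntegrand; fun_prop

lemma ae_norm_mvnIntegrand_le {a b h : ℝ} (ha : -1/2 ≤ a) (hb : b ≤ 1) (hh : h ∈ Icc a b) :
    ∀ᵐ s ∂volume.restrict (Ioi 0), ‖mvnIntegrand h s‖ ≤ mvnBound a b s := by
  filter_upwards [ae_restrict_mem measurableSet_Ioi] with s hs
  exact (Real.norm_of_nonneg (sq_nonneg _)).trans_le (mvnIntegrand_le_mvnBound ha hb hh hs)

lemma integrableOn_mvnIntegrand {h : ℝ} (hh : h ∈ Ioo 0 1) :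
    IntegrableOn (mvnIntegrand h) (Ioi 0) :=
  (integrableOn_mvnBound hh.1 hh.2).mono' (measurable_mvnIntegrand h).aestronglyMeasurable
    (ae_norm_mvnIntegrand_le (by linarith [hh.1]) hh.2.le ⟨le_rfl, le_rfl⟩)

lemma continuousOn_integral_mvnIntegrand :
    ContinuousOn (fun h => ∫ s in Ioi 0, mvnIntegrand h s) (Ioo 0 1) := by
  intro h₀ ⟨h₀_pos, h₀_lt⟩
  have h_nhds : Icc (h₀ / 2) ((1 + h₀) / 2) ∈ nhds h₀ :=
    Icc_mem_nhds (by linarith) (by linarith)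
  refine (continuousAt_of_dominated (bound := mvnBound (h₀ / 2) ((1 + h₀) / 2))
    (Eventually.of_forall fun h => (measurable_mvnIntegrand h).aestronglyMeasurable)
    ?_ (integrableOn_mvnBound (by linarith) (by linarith)) ?_).continuousWithinAt
  · filter_upwards [h_nhds] with h hh
    exact ae_norm_mvnIntegrand_le (by linarith) (by linarith) hh
  · filter_upwards [ae_restrict_mem measurableSet_Ioi] with s hs
    exact (continuous_mvnIntegrand_left hs).continuousAt

theorem stmt2 (𝓗 : Set ℝ) (hcpt : IsCompact 𝓗) (hsub : 𝓗 ⊆ Set.Ioo 0 1) :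
    (∀ h ∈ Set.Ioo (0:ℝ) 1, MeasureTheory.IntegrableOn
        (fun s : ℝ => ((1 + s) ^ (h - 1/2) - s ^ (h - 1/2)) ^ 2) (Set.Ioi 0)) ∧
    ContinuousOn
      (fun h : ℝ => ∫ s in Set.Ioi (0:ℝ), ((1 + s) ^ (h - 1/2) - s ^ (h - 1/2)) ^ 2) 𝓗 ∧
    ∃ M : ℝ, ∀ h ∈ 𝓗,
      (∫ s in Set.Ioi (0:ℝ), ((1 + s) ^ (h - 1/2) - s ^ (h - 1/2)) ^ 2) ≤ M := by
  have h_cont : ContinuousOn (fun h => ∫ s in Ioi 0, mvnIntegrand h s) 𝓗 :=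
    continuousOn_integral_mvnIntegrand.mono hsub
  obtain ⟨M, hM⟩ := hcpt.bddAbove_image h_cont
  exact ⟨fun h hh => integrableOn_mvnIntegrand hh, h_cont,
    M, fun h hh => hM (mem_image_of_mem _ hh)⟩
end

section
/- Let 𝓗 ⊂ (0,1) be compact and ρ := 4 max(𝓗) - 4. There exists a constant C such that for all t ≥ 0: ∫₀^{t+1}∫₀^{t+1} (1 ∧ |s₁ - s₂|^ρ) ds₁ ds₂ ≤ C (log(t+1) + 1)(t+1)^{(4max(𝓗)-2) ∨ 1}, and ∫_{[0,t+1]³} (1 ∧ |s₁-s₂|^ρ)(1 ∧ |s₂-s₃|^ρ) ds ≤ C (log(t+1)+1)² (t+1)^{(8max(𝓗)-5) ∨ 1}. -/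
/-!
For `ρ < 0` and `|x| ≤ T` with `T ≥ 1`, the kernel `1 ∧ |x|^ρ` is at most
`T^((ρ+1) ∨ 0) · (1 ∧ |x|⁻¹)`, and `∫_{-T}^{T} (1 ∧ |u|⁻¹) du ≤ 2 (1 + log T)`. Hence every
slice `∫₀ᵀ (1 ∧ |s - y|^ρ) dy` is bounded by `B := 2 (log T + 1) T^((ρ+1) ∨ 0)`, uniformly in
`s ∈ [0, T]`. Integrating slice by slice bounds the double integral by `B T` and the triple
one by `B² T`, which are the claimed bounds with `T = t + 1` and `ρ = 4 max 𝓗 - 4`.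
-/

open MeasureTheory Set Real

lemma integrableOn_min_one_of_nonneg {α : Type*} [MeasurableSpace α] {μ : Measure α}
    {f : α → ℝ} (hf : Measurable f) (h0 : ∀ x, 0 ≤ f x) {s : Set α} (hs : μ s ≠ ⊤) :
    IntegrableOn (fun x => min 1 (f x)) s μ := by
  refine Measure.integrableOn_of_bounded (M := 1) hs (by fun_prop) (.of_forall fun x => ?_)
  rw [Real.norm_of_nonneg (le_min zero_le_one (h0 x))]
  exact min_le_left _ _

lemma setIntegral_le_mul_measureReal_of_le {α : Type*} [MeasurableSpace α] {μ : Measure α}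
    {F : α → ℝ} {s : Set α} {c : ℝ} (hs : μ s < ⊤) (h0 : ∀ x ∈ s, 0 ≤ F x)
    (hle : ∀ x ∈ s, F x ≤ c) :
    ∫ x in s, F x ∂μ ≤ c * μ.real s :=
  (Real.le_norm_self _).trans <| norm_setIntegral_le_of_norm_le_const hs fun x hx => by
    rw [Real.norm_of_nonneg (h0 x hx)]
    exact hle x hx

lemma intervalIntegrable_min_one_abs_inv (a b : ℝ) :
    IntervalIntegrable (fun u : ℝ => min 1 |u|⁻¹) volume a b :=
  (integrableOn_min_one_of_nonneg (by fun_prop) (fun u => by positivity)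
    measure_Icc_lt_top.ne).intervalIntegrable

lemma integral_min_one_abs_inv_le {T : ℝ} (hT : 1 ≤ T) :
    ∫ u in (0:ℝ)..T, min 1 |u|⁻¹ ≤ log T + 1 := by
  rw [← intervalIntegral.integral_add_adjacent_intervals (b := 1)
    (intervalIntegrable_min_one_abs_inv _ _) (intervalIntegrable_min_one_abs_inv _ _)]
  have h_unit : ∫ u in (0:ℝ)..1, min 1 |u|⁻¹ ≤ 1 := by
    simpa using intervalIntegral.integral_mono_on zero_le_one
      (intervalIntegrable_min_one_abs_inv _ _) intervalIntegrable_const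
      (fun u _ => min_le_left 1 |u|⁻¹)
  have h_tail : ∫ u in (1:ℝ)..T, min 1 |u|⁻¹ = log T := by
    have h_eq : EqOn (fun u : ℝ => min 1 |u|⁻¹) (·⁻¹) (uIcc 1 T) := fun u hu => by
      rw [uIcc_of_le hT] at hu
      dsimp only
      rw [abs_of_pos (by linarith [hu.1])]
      exact min_eq_right (inv_le_one_of_one_le₀ hu.1)
    rw [intervalIntegral.integral_congr h_eq, integral_inv_of_pos one_pos (by linarith), div_one]
  linarith

lemma integral_neg_pos_min_one_abs_inv_le {T : ℝ} (hT : 1 ≤ T) :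
    ∫ u in (-T)..T, min 1 |u|⁻¹ ≤ 2 * (log T + 1) := by
  rw [← intervalIntegral.integral_add_adjacent_intervals (b := 0)
    (intervalIntegrable_min_one_abs_inv _ _) (intervalIntegrable_min_one_abs_inv _ _)]
  have h_neg : ∫ u in (-T)..0, min 1 |u|⁻¹ = ∫ u in (0:ℝ)..T, min 1 |u|⁻¹ := by
    simpa using (intervalIntegral.integral_comp_neg (a := 0) (b := T)
      (fun u : ℝ => min 1 |u|⁻¹)).symm
  linarith [integral_min_one_abs_inv_le hT]

lemma setIntegral_Icc_min_one_abs_sub_inv_le {T s : ℝ} (hT : 1 ≤ T) (hs : s ∈ Icc 0 T) :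
    ∫ y in Icc 0 T, min 1 |s - y|⁻¹ ≤ 2 * (log T + 1) := by
  rw [integral_Icc_eq_integral_Ioc, ← intervalIntegral.integral_of_le (by linarith),
    intervalIntegral.integral_comp_sub_left (fun u => min 1 |u|⁻¹) s]
  refine le_trans ?_ (integral_neg_pos_min_one_abs_inv_le hT)
  exact intervalIntegral.integral_mono_interval (by linarith [hs.1]) (by linarith)
    (by linarith [hs.2]) (.of_forall fun u => by positivity)
    (intervalIntegrable_min_one_abs_inv _ _)

section Kernel

variable {ρ T : ℝ}

lemma min_one_abs_rpow_le (hρ : ρ < 0) (hT : 1 ≤ T) {x : ℝ} (hx : |x| ≤ T) :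
    min 1 (|x| ^ ρ) ≤ T ^ max (ρ + 1) 0 * min 1 |x|⁻¹ := by
  have hTm : 1 ≤ T ^ max (ρ + 1) 0 := one_le_rpow hT (le_max_right _ _)
  rcases eq_or_ne x 0 with rfl | hx0
  · simp [zero_rpow hρ.ne]
  have habs : 0 < |x| := abs_pos.mpr hx0
  rcases le_or_gt |x| 1 with h_near | h_far
  · rw [min_eq_left ((one_le_inv₀ habs).mpr h_near), mul_one]
    exact (min_le_left _ _).trans hTm
  rw [min_eq_right (inv_le_one_of_one_le₀ h_far.le)]
  have h_split : |x| ^ ρ = |x| ^ (ρ + 1) * |x|⁻¹ := by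
    rw [rpow_add habs, rpow_one, mul_assoc, mul_inv_cancel₀ habs.ne', mul_one]
  refine (min_le_right _ _).trans (h_split ▸ ?_)
  gcongr
  rcases le_or_gt (ρ + 1) 0 with h | h
  · exact (rpow_le_one_of_one_le_of_nonpos h_far.le h).trans hTm
  · rw [max_eq_left h.le]
    exact rpow_le_rpow habs.le hx h.le

lemma integrableOn_min_one_abs_sub_rpow (a : ℝ) :
    IntegrableOn (fun y => min 1 (|a - y| ^ ρ)) (Icc 0 T) :=
  integrableOn_min_one_of_nonneg (by fun_prop) (fun _ => by positivity) measure_Icc_lt_top.ne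

lemma setIntegral_Icc_min_one_abs_sub_rpow_nonneg (a : ℝ) :
    0 ≤ ∫ y in Icc 0 T, min 1 (|a - y| ^ ρ) :=
  setIntegral_nonneg measurableSet_Icc fun _ _ => by positivity

lemma setIntegral_Icc_min_one_abs_sub_rpow_le (hρ : ρ < 0) (hT : 1 ≤ T) {s : ℝ}
    (hs : s ∈ Icc 0 T) :
    ∫ y in Icc 0 T, min 1 (|s - y| ^ ρ) ≤ 2 * (log T + 1) * T ^ max (ρ + 1) 0 :=
  calc ∫ y in Icc 0 T, min 1 (|s - y| ^ ρ)
      ≤ ∫ y in Icc 0 T, T ^ max (ρ + 1) 0 * min 1 |s - y|⁻¹ := by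
        refine setIntegral_mono_on (integrableOn_min_one_abs_sub_rpow s)
          ((integrableOn_min_one_of_nonneg (by fun_prop) (fun _ => by positivity)
            measure_Icc_lt_top.ne).const_mul _) measurableSet_Icc fun y hy => ?_
        exact min_one_abs_rpow_le hρ hT (abs_sub_le_iff.mpr
          ⟨by linarith [hs.2, hy.1], by linarith [hs.1, hy.2]⟩)
    _ = T ^ max (ρ + 1) 0 * ∫ y in Icc 0 T, min 1 |s - y|⁻¹ := integral_const_mul _ _
    _ ≤ T ^ max (ρ + 1) 0 * (2 * (log T + 1)) := by
        gcongr
        exact setIntegral_Icc_min_one_abs_sub_inv_le hT hs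
    _ = 2 * (log T + 1) * T ^ max (ρ + 1) 0 := mul_comm _ _

lemma integral_Icc_integral_Icc_min_one_abs_sub_rpow_le (hρ : ρ < 0) (hT : 1 ≤ T) :
    ∫ s₁ in Icc 0 T, ∫ s₂ in Icc 0 T, min 1 (|s₁ - s₂| ^ ρ) ≤
      2 * (log T + 1) * T ^ max (ρ + 2) 1 := by
  have hT0 : 0 < T := zero_lt_one.trans_le hT
  have h_exp : T ^ max (ρ + 2) 1 = T ^ max (ρ + 1) 0 * T := by
    rw [← rpow_add_one hT0.ne', ← max_add_add_right]
    norm_num [add_assoc]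
  calc _ ≤ 2 * (log T + 1) * T ^ max (ρ + 1) 0 * volume.real (Icc 0 T) :=
        setIntegral_le_mul_measureReal_of_le measure_Icc_lt_top
          (fun s _ => setIntegral_Icc_min_one_abs_sub_rpow_nonneg s)
          (fun s hs => setIntegral_Icc_min_one_abs_sub_rpow_le hρ hT hs)
    _ = 2 * (log T + 1) * T ^ max (ρ + 2) 1 := by
        rw [volume_real_Icc_of_le hT0.le, sub_zero, h_exp, mul_assoc]

lemma integral_Icc_triple_min_one_abs_sub_rpow_le (hρ : ρ < 0) (hT : 1 ≤ T) :
    ∫ s₁ in Icc 0 T, ∫ s₂ in Icc 0 T, ∫ s₃ in Icc 0 T,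
        min 1 (|s₁ - s₂| ^ ρ) * min 1 (|s₂ - s₃| ^ ρ) ≤
      4 * (log T + 1) ^ 2 * T ^ max (2 * ρ + 3) 1 := by
  have hT0 : 0 < T := zero_lt_one.trans_le hT
  set B := 2 * (log T + 1) * T ^ max (ρ + 1) 0
  have hB : 0 ≤ B := by have := log_nonneg hT; positivity
  have h_slice : ∀ s₁ ∈ Icc 0 T, ∫ s₂ in Icc 0 T, ∫ s₃ in Icc 0 T,
      min 1 (|s₁ - s₂| ^ ρ) * min 1 (|s₂ - s₃| ^ ρ) ≤ B * B := fun s₁ hs₁ =>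
    calc _ = ∫ s₂ in Icc 0 T, min 1 (|s₁ - s₂| ^ ρ) * ∫ s₃ in Icc 0 T, min 1 (|s₂ - s₃| ^ ρ) :=
          by simp only [integral_const_mul]
      _ ≤ ∫ s₂ in Icc 0 T, min 1 (|s₁ - s₂| ^ ρ) * B := by
          refine integral_mono_of_nonneg (.of_forall fun s₂ => ?_)
            ((integrableOn_min_one_abs_sub_rpow s₁).mul_const B) ?_
          · have := setIntegral_Icc_min_one_abs_sub_rpow_nonneg (T := T) (ρ := ρ) s₂
            positivity
          · filter_upwards [ae_restrict_mem measurableSet_Icc] with s₂ hs₂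
            gcongr
            exact setIntegral_Icc_min_one_abs_sub_rpow_le hρ hT hs₂
      _ ≤ B * B := by
          rw [integral_mul_const]
          gcongr
          exact setIntegral_Icc_min_one_abs_sub_rpow_le hρ hT hs₁
  have h_exp : T ^ max (2 * ρ + 3) 1 = T ^ max (ρ + 1) 0 * T ^ max (ρ + 1) 0 * T := by
    rw [← rpow_add hT0, ← rpow_add_one hT0.ne']
    congr 1
    rcases le_total (ρ + 1) 0 with h | h
    · rw [max_eq_right h, max_eq_right (by linarith)]; ring
    · rw [max_eq_left h, max_eq_left (by linarith)]; ring
  calc _ ≤ B * B * volume.real (Icc 0 T) :=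
        setIntegral_le_mul_measureReal_of_le measure_Icc_lt_top
          (fun s₁ _ => setIntegral_nonneg measurableSet_Icc fun s₂ _ =>
            setIntegral_nonneg measurableSet_Icc fun s₃ _ => by positivity)
          h_slice
    _ = 4 * (log T + 1) ^ 2 * T ^ max (2 * ρ + 3) 1 := by
        rw [volume_real_Icc_of_le hT0.le, sub_zero, h_exp]
        ring

end Kernel

theorem stmt17 (𝓗 : Set ℝ) (hcpt : IsCompact 𝓗) (hne : 𝓗.Nonempty)
    (hsub : 𝓗 ⊆ Set.Ioo 0 1) :
    ∃ C : ℝ, ∀ t : ℝ, 0 ≤ t →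
      (∫ s₁ in Set.Icc (0:ℝ) (t+1), ∫ s₂ in Set.Icc (0:ℝ) (t+1),
          min 1 (|s₁ - s₂| ^ (4 * sSup 𝓗 - 4))) ≤
        C * (Real.log (t+1) + 1) * (t+1) ^ (max (4 * sSup 𝓗 - 2) 1) ∧
      (∫ s₁ in Set.Icc (0:ℝ) (t+1), ∫ s₂ in Set.Icc (0:ℝ) (t+1),
          ∫ s₃ in Set.Icc (0:ℝ) (t+1),
          min 1 (|s₁ - s₂| ^ (4 * sSup 𝓗 - 4)) * min 1 (|s₂ - s₃| ^ (4 * sSup 𝓗 - 4))) ≤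
        C * (Real.log (t+1) + 1) ^ 2 * (t+1) ^ (max (8 * sSup 𝓗 - 5) 1) := by
  have hρ : 4 * sSup 𝓗 - 4 < 0 := by linarith [(hsub (hcpt.sSup_mem hne)).2]
  refine ⟨4, fun t ht => ⟨?_, ?_⟩⟩
  · have hT : 1 ≤ t + 1 := by linarith
    have h := integral_Icc_integral_Icc_min_one_abs_sub_rpow_le hρ hT
    rw [show 4 * sSup 𝓗 - 4 + 2 = 4 * sSup 𝓗 - 2 by ring] at h
    refine h.trans ?_
    have := log_nonneg hT
    gcongr
    norm_num
  · have h := integral_Icc_triple_min_one_abs_sub_rpow_le hρ (by linarith : 1 ≤ t + 1)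
    rwa [show 2 * (4 * sSup 𝓗 - 4) + 3 = 8 * sSup 𝓗 - 5 by ring] at h
end

section
/- Euler scheme comparison with the discrete OU scheme: let b satisfy ⟨b(x)-b(y),x-y⟩ ≤ -κ|x-y|², |b(x)-b(y)| ≤ K|x-y| with κ, K > 0, let γ ∈ (0,1) be such that 0 < κγ - 2K²γ² < 1. For two continuous driving paths define the Euler iterates M_{(k+1)γ} = M_{kγ} + γ b(M_{kγ}) + Δ_k and the OU iterates M⁰_{(k+1)γ} = (1-γ) M⁰_{kγ} + Δ_k with the same increments Δ_k and same initial conditions, for two different noises yielding differences 𝓜_{kγ} = M^H_{kγ} - M^K_{kγ} and 𝓜⁰_{kγ} = M^{0,H}_{kγ} - M^{0,K}_{kγ} with 𝓜₀ = 𝓜⁰₀. Then there is a constant C (depending only on κ, K) such that for all N ≥ 1: (1/N) Σ_{k=0}^N |𝓜_{kγ}|² ≤ C (1/N) Σ_{k=0}^N |𝓜⁰_{kγ}|². -/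
/-!
Write `𝓜ₖ`, `𝓜⁰ₖ` for the differences of the Euler and OU iterates and `eₖ = 𝓜ₖ - 𝓜⁰ₖ`. The common
increments cancel, leaving `eₖ₊₁ = eₖ + γ (βₖ + 𝓜⁰ₖ)` with `βₖ = b(M^H_k) - b(M^K_k)`. Expanding
`‖eₖ₊₁‖²` and using dissipativity, the Lipschitz bound, `2K²γ ≤ κ`, `γ ≤ 1` and Young's inequality
gives `‖eₖ₊₁‖² ≤ ‖eₖ‖² - (κγ/2) ‖𝓜ₖ‖² + γ (2(K+1)²/κ) ‖𝓜⁰ₖ‖²`. Since `e₀ = 0`, summing this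
telescoping inequality bounds `∑ ‖𝓜ₖ‖²` by `4(K+1)²/κ² · ∑ ‖𝓜⁰ₖ‖²`.
-/

open RealInnerProductSpace

lemma telescope_add_sum_le {u x y : ℕ → ℝ} (h : ∀ k, u (k + 1) ≤ u k - x k + y k) (n : ℕ) :
    u n + ∑ k ∈ Finset.range n, x k ≤ u 0 + ∑ k ∈ Finset.range n, y k := by
  induction n with
  | zero => simp
  | succ n ih =>
    rw [Finset.sum_range_succ, Finset.sum_range_succ]
    linarith [h n]

lemma young_mul_le {κ : ℝ} (hκ : 0 < κ) (c a b : ℝ) :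
    2 * c * (a * b) ≤ κ / 2 * a ^ 2 + 2 * c ^ 2 / κ * b ^ 2 := by
  have key : 0 ≤ (κ * a - 2 * c * b) ^ 2 / (2 * κ) := by positivity
  have expand : (κ * a - 2 * c * b) ^ 2 / (2 * κ)
      = κ / 2 * a ^ 2 + 2 * c ^ 2 / κ * b ^ 2 - 2 * c * (a * b) := by
    field_simp
    ring
  linarith

lemma norm_add_sq_le_of_norm_le {E : Type*} [SeminormedAddCommGroup E] {x y : E} {r : ℝ}
    (hx : ‖x‖ ≤ r) : ‖x + y‖ ^ 2 ≤ 2 * r ^ 2 + 2 * ‖y‖ ^ 2 := by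
  have h : ‖x + y‖ ≤ r + ‖y‖ := (norm_add_le x y).trans (by linarith)
  nlinarith [norm_nonneg (x + y), sq_nonneg (r - ‖y‖)]

section EulerComparison

variable {E : Type*} [NormedAddCommGroup E] [InnerProductSpace ℝ E] {κ K γ : ℝ}

lemma inner_add_sub_le_of_dissipative {A B β : E} (hdiss : ⟪β, A⟫ ≤ -κ * ‖A‖ ^ 2)
    (hlip : ‖β‖ ≤ K * ‖A‖) :
    ⟪β + B, A - B⟫ ≤ -κ * ‖A‖ ^ 2 + (K + 1) * (‖A‖ * ‖B‖) - ‖B‖ ^ 2 := by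
  have expand : ⟪β + B, A - B⟫ = ⟪β, A⟫ - ⟪β, B⟫ + ⟪B, A⟫ - ‖B‖ ^ 2 := by
    simp only [inner_add_left, inner_sub_right, real_inner_self_eq_norm_sq]
    ring
  have hβB : -⟪β, B⟫ ≤ K * ‖A‖ * ‖B‖ :=
    (neg_le_abs _).trans ((abs_real_inner_le_norm β B).trans
      (mul_le_mul_of_nonneg_right hlip (norm_nonneg B)))
  linarith [real_inner_le_norm B A]

lemma norm_sub_add_smul_sq_le {A B β : E} (hκ : 0 < κ) (hγ : 0 < γ) (hγ1 : γ ≤ 1)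
    (hKγ : 2 * K ^ 2 * γ ≤ κ) (hdiss : ⟪β, A⟫ ≤ -κ * ‖A‖ ^ 2) (hlip : ‖β‖ ≤ K * ‖A‖) :
    ‖(A - B) + γ • (β + B)‖ ^ 2
      ≤ ‖A - B‖ ^ 2 - κ * γ / 2 * ‖A‖ ^ 2 + γ * (2 * (K + 1) ^ 2 / κ) * ‖B‖ ^ 2 := by
  have expand : ‖(A - B) + γ • (β + B)‖ ^ 2
      = ‖A - B‖ ^ 2 + 2 * γ * ⟪β + B, A - B⟫ + γ ^ 2 * ‖β + B‖ ^ 2 := by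
    rw [norm_add_sq_real, real_inner_smul_right, norm_smul, real_inner_comm, mul_pow,
      Real.norm_eq_abs, sq_abs]
    ring
  have hip := inner_add_sub_le_of_dissipative (B := B) hdiss hlip
  have hsq : ‖β + B‖ ^ 2 ≤ 2 * K ^ 2 * ‖A‖ ^ 2 + 2 * ‖B‖ ^ 2 := by
    simpa only [mul_pow, mul_assoc] using norm_add_sq_le_of_norm_le (y := B) hlip
  have hquad : γ * ‖β + B‖ ^ 2 ≤ κ * ‖A‖ ^ 2 + 2 * ‖B‖ ^ 2 := by
    have h1 : γ * (2 * K ^ 2) * ‖A‖ ^ 2 ≤ κ * ‖A‖ ^ 2 := by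
      gcongr
      linarith
    have h2 : γ * (2 * ‖B‖ ^ 2) ≤ 2 * ‖B‖ ^ 2 := by
      nlinarith [sq_nonneg ‖B‖]
    nlinarith
  have hyoung := young_mul_le hκ (K + 1) ‖A‖ ‖B‖
  rw [expand]
  nlinarith

theorem sum_norm_sq_le_of_euler_step {x y β : ℕ → E} (hκ : 0 < κ) (hγ : 0 < γ) (hγ1 : γ ≤ 1)
    (hKγ : 2 * K ^ 2 * γ ≤ κ) (hdiss : ∀ k, ⟪β k, x k⟫ ≤ -κ * ‖x k‖ ^ 2)
    (hlip : ∀ k, ‖β k‖ ≤ K * ‖x k‖)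
    (hstep : ∀ k, x (k + 1) - y (k + 1) = (x k - y k) + γ • (β k + y k)) (h0 : x 0 = y 0)
    (n : ℕ) :
    ∑ k ∈ Finset.range n, ‖x k‖ ^ 2 ≤ 4 * (K + 1) ^ 2 / κ ^ 2 * ∑ k ∈ Finset.range n, ‖y k‖ ^ 2 := by
  have htel := telescope_add_sum_le (u := fun k ↦ ‖x k - y k‖ ^ 2)
    (x := fun k ↦ κ * γ / 2 * ‖x k‖ ^ 2) (y := fun k ↦ γ * (2 * (K + 1) ^ 2 / κ) * ‖y k‖ ^ 2)
    (fun k ↦ by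
      simpa only [hstep k] using norm_sub_add_smul_sq_le hκ hγ hγ1 hKγ (hdiss k) (hlip k)) n
  simp only [h0, sub_self, norm_zero, ← Finset.mul_sum] at htel
  have hpos : 0 < κ * γ / 2 := by positivity
  rw [← mul_le_mul_iff_of_pos_left hpos]
  calc κ * γ / 2 * ∑ k ∈ Finset.range n, ‖x k‖ ^ 2
      ≤ γ * (2 * (K + 1) ^ 2 / κ) * ∑ k ∈ Finset.range n, ‖y k‖ ^ 2 := by
        nlinarith [sq_nonneg ‖x n - y n‖]
    _ = κ * γ / 2 * (4 * (K + 1) ^ 2 / κ ^ 2 * ∑ k ∈ Finset.range n, ‖y k‖ ^ 2) := by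
        field_simp
        ring

end EulerComparison

theorem stmt18_general (d : ℕ) (κ K : ℝ) (hκ : 0 < κ) :
    ∃ C : ℝ, ∀ b : EuclideanSpace ℝ (Fin d) → EuclideanSpace ℝ (Fin d),
      (∀ x y, ⟪b x - b y, x - y⟫ ≤ -κ * ‖x - y‖ ^ 2) →
      (∀ x y, ‖b x - b y‖ ≤ K * ‖x - y‖) →
      ∀ γ : ℝ, γ ∈ Set.Ioo (0:ℝ) 1 →
        0 < κ * γ - 2 * K ^ 2 * γ ^ 2 → κ * γ - 2 * K ^ 2 * γ ^ 2 < 1 →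
      ∀ Δ Δ' MH MK M0H M0K : ℕ → EuclideanSpace ℝ (Fin d),
        (∀ k, MH (k+1) = MH k + γ • b (MH k) + Δ k) →
        (∀ k, MK (k+1) = MK k + γ • b (MK k) + Δ' k) →
        (∀ k, M0H (k+1) = (1-γ) • M0H k + Δ k) →
        (∀ k, M0K (k+1) = (1-γ) • M0K k + Δ' k) →
        MH 0 = M0H 0 → MK 0 = M0K 0 →
        ∀ N : ℕ, 1 ≤ N →
          (1 / (N:ℝ)) * ∑ k ∈ Finset.range (N+1), ‖MH k - MK k‖ ^ 2 ≤
            C * ((1 / (N:ℝ)) * ∑ k ∈ Finset.range (N+1), ‖M0H k - M0K k‖ ^ 2) := by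
  refine ⟨4 * (K + 1) ^ 2 / κ ^ 2, ?_⟩
  intro b hdiss hlip γ ⟨hγ0, hγ1⟩ hpos _ Δ Δ' MH MK M0H M0K hMH hMK hM0H hM0K hH0 hK0 N _
  have hKγ : 2 * K ^ 2 * γ ≤ κ := by nlinarith
  have hstep : ∀ k, (MH (k + 1) - MK (k + 1)) - (M0H (k + 1) - M0K (k + 1))
      = ((MH k - MK k) - (M0H k - M0K k)) + γ • ((b (MH k) - b (MK k)) + (M0H k - M0K k)) := by
    intro k
    rw [hMH, hMK, hM0H, hM0K]
    module
  have hsum := sum_norm_sq_le_of_euler_step (x := fun k ↦ MH k - MK k)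
    (y := fun k ↦ M0H k - M0K k) hκ hγ0 hγ1.le hKγ (fun k ↦ hdiss (MH k) (MK k))
    (fun k ↦ hlip (MH k) (MK k)) hstep (by simp only [hH0, hK0]) (N + 1)
  rw [mul_left_comm]
  gcongr

theorem stmt18 (d : ℕ) (κ K : ℝ) (hκ : 0 < κ) (hK : 0 < K) :
    ∃ C : ℝ, ∀ b : EuclideanSpace ℝ (Fin d) → EuclideanSpace ℝ (Fin d),
      (∀ x y, ⟪b x - b y, x - y⟫ ≤ -κ * ‖x - y‖ ^ 2) →
      (∀ x y, ‖b x - b y‖ ≤ K * ‖x - y‖) →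
      ∀ γ : ℝ, γ ∈ Set.Ioo (0:ℝ) 1 →
        0 < κ * γ - 2 * K ^ 2 * γ ^ 2 → κ * γ - 2 * K ^ 2 * γ ^ 2 < 1 →
      ∀ Δ Δ' MH MK M0H M0K : ℕ → EuclideanSpace ℝ (Fin d),
        (∀ k, MH (k+1) = MH k + γ • b (MH k) + Δ k) →
        (∀ k, MK (k+1) = MK k + γ • b (MK k) + Δ' k) →
        (∀ k, M0H (k+1) = (1-γ) • M0H k + Δ k) →
        (∀ k, M0K (k+1) = (1-γ) • M0K k + Δ' k) →
        MH 0 = M0H 0 → MK 0 = M0K 0 →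
        ∀ N : ℕ, 1 ≤ N →
          (1 / (N:ℝ)) * ∑ k ∈ Finset.range (N+1), ‖MH k - MK k‖ ^ 2 ≤
            C * ((1 / (N:ℝ)) * ∑ k ∈ Finset.range (N+1), ‖M0H k - M0K k‖ ^ 2) :=
  stmt18_general d κ K hκ
end
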